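/- Assume the primal-dual pair {(P),(D)} (with data c ∈ X*, b ∈ Y*) is consistent, and let v be the value of the game G = (α,β,A) for some α ∈ int C*, β ∈ int K*. If v = 0 and either B^I ∩ c^⊥ = ∅ or B^II ∩ b^⊥ = ∅ (where B^I, B^II are the sets of optimal strategies of players I and II, c^⊥ := {x ∈ X : ⟨c,x⟩ = 0}, b^⊥ := {y ∈ Y : ⟨y,b⟩ = 0}), then at least one of (P), (D) is strictly feasible; in fact val(P) = val(D), and at least one of the sets of optimal solutions S(P), S(D) is nonempty, convex, and bounded. -/

import Mathlib

/-
If `B^I ∩ c^⊥ = ∅` and `v = 0`, every nonzero recession direction `x` of (P) (`x ∈ C`,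
`A x ∈ K*`) has `⟨c, x⟩ ≠ 0`: a positive multiple of `x` is a strategy of player I whose
security level is `≥ 0 = v`, hence an optimal one. If (D) had no strictly feasible point,
separating `int C*` from the convex set `{c - A* y : y ∈ K}` in `X*`, and reading the normal
as a point of the reflexive space `X`, would give such a direction with `⟨c, x⟩ ≤ 0`, while
any feasible `y₀` of (D) forces `⟨c, x⟩ ≥ ⟨y₀, A x⟩ ≥ 0`.

For a strictly feasible `y₀` of (D), the point `(0, val D)` is not interior to the convex set
`{(c - A* y - w, s) : y ∈ K, w ∈ C*, s ≤ ⟨y, b⟩} ⊆ X* × ℝ`, which contains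
`(0, ⟨y₀, b⟩ - 1)` in its interior. A supporting functional has the form
`(w, s) ↦ ⟨w, x⟩ + γ s` with `γ > 0`, and `x / γ` is feasible for (P) with value `≤ val D`:
there is no duality gap and `S(P)` is nonempty. It is bounded because
`⟨c - A* y₀, x⟩ ≥ ε ‖x‖` on `C`.

The case `B^II ∩ b^⊥ = ∅` is the same argument for the data `(-A*, K, C, -b, -c)`, whose
primal program is (D) and whose dual program is (P).
-/

open Set

lemma nonpos_of_forall_pos_mul_le {p q : ℝ} (h : ∀ t : ℝ, 0 < t → t * p ≤ q) : p ≤ 0 := by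
  by_contra! hp
  have := h ((|q| + 1) / p) (by positivity)
  rw [div_mul_cancel₀ _ hp.ne'] at this
  linarith [le_abs_self q]

lemma sInf_image_eq_zero_of_nonneg {ι κ : Type*} (u : ι → κ → ℝ) {S : Set ι} {T : Set κ}
    (hT : T.Nonempty) (hbdd : BddAbove ((fun x => sInf (u x '' T)) '' S))
    (hv : sSup ((fun x => sInf (u x '' T)) '' S) = 0) {x : ι} (hx : x ∈ S)
    (hux : ∀ y ∈ T, 0 ≤ u x y) : sInf (u x '' T) = 0 :=
  le_antisymm (hv ▸ le_csSup hbdd (mem_image_of_mem _ hx))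
    (le_csInf (hT.image _) (forall_mem_image.2 hux))

lemma sSup_image_eq_zero_of_nonpos {ι κ : Type*} (u : ι → κ → ℝ) {S : Set ι} {T : Set κ}
    (hS : S.Nonempty) (hbdd : BddBelow ((fun y => sSup ((u · y) '' S)) '' T))
    (hv : sInf ((fun y => sSup ((u · y) '' S)) '' T) = 0) {y : κ} (hy : y ∈ T)
    (huy : ∀ x ∈ S, u x y ≤ 0) : sSup ((u · y) '' S) = 0 :=
  le_antisymm (csSup_le (hS.image _) (forall_mem_image.2 huy))
    (hv ▸ csInf_le hbdd (mem_image_of_mem _ hy))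

section DualCone

variable {E : Type*} [NormedAddCommGroup E] [NormedSpace ℝ E]

def dualCone (C : Set E) : Set (E →L[ℝ] ℝ) := {w | ∀ x ∈ C, 0 ≤ w x}

lemma convex_dualCone (C : Set E) : Convex ℝ (dualCone C) :=
  fun _ hw _ hw' _ _ ha hb _ x hx =>
    add_nonneg (mul_nonneg ha (hw x hx)) (mul_nonneg hb (hw' x hx))

lemma smul_mem_dualCone {C : Set E} {w : E →L[ℝ] ℝ} (hw : w ∈ dualCone C) {t : ℝ} (ht : 0 ≤ t) :
    t • w ∈ dualCone C :=
  fun x hx => mul_nonneg ht (hw x hx)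

lemma add_mem_dualCone {C : Set E} {w w' : E →L[ℝ] ℝ} (hw : w ∈ dualCone C)
    (hw' : w' ∈ dualCone C) : w + w' ∈ dualCone C :=
  fun x hx => add_nonneg (hw x hx) (hw' x hx)

lemma mem_of_forall_mem_dualCone_nonneg {C : Set E} (hC : ∀ r : ℝ, 0 ≤ r → ∀ x ∈ C, r • x ∈ C)
    (hCconv : Convex ℝ C) (hCclosed : IsClosed C) (hCne : C.Nonempty) {x : E}
    (hx : ∀ w ∈ dualCone C, 0 ≤ w x) : x ∈ C := by
  obtain ⟨x₀, hx₀⟩ := hCne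
  let P : ProperCone ℝ E :=
    { carrier := C
      add_mem' := fun {a b} ha hb => by
        simpa [← smul_add] using hC 2 zero_le_two _ (hCconv ha hb (by norm_num : (0 : ℝ) ≤ 1 / 2)
          (by norm_num : (0 : ℝ) ≤ 1 / 2) (by norm_num))
      zero_mem' := by simpa using hC 0 le_rfl x₀ hx₀
      smul_mem' := fun t a ha => hC t t.2 a ha
      isClosed' := hCclosed }
  by_contra hxC
  obtain ⟨f, hf, hfx⟩ := P.hyperplane_separation_point (x₀ := x) hxC
  exact hfx.not_ge (hx f hf)

lemma exists_mul_norm_le_of_mem_interior_dualCone {C : Set E} {w : E →L[ℝ] ℝ}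
    (hw : w ∈ interior (dualCone C)) : ∃ ε > 0, ∀ x ∈ C, ε * ‖x‖ ≤ w x := by
  obtain ⟨ε, hε, hball⟩ := Metric.nhds_basis_closedBall.mem_iff.1 (mem_interior_iff_mem_nhds.1 hw)
  refine ⟨ε, hε, fun x hx => ?_⟩
  rcases eq_or_ne x 0 with rfl | hx0
  · simp
  obtain ⟨g, hg, hgx⟩ := exists_dual_vector ℝ x (norm_ne_zero_iff.2 hx0)
  have hmem : w - ε • g ∈ dualCone C := hball <| by
    rw [Metric.mem_closedBall, dist_eq_norm, sub_sub_cancel_left, norm_neg, norm_smul, hg,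
      Real.norm_of_nonneg hε.le, mul_one]
  have := hmem x hx
  simp only [sub_apply, smul_apply, hgx, smul_eq_mul, RCLike.ofReal_real_eq_id, id] at this
  linarith

lemma pos_of_mem_interior_dualCone {C : Set E} {w : E →L[ℝ] ℝ}
    (hw : w ∈ interior (dualCone C)) {x : E} (hx : x ∈ C) (hx0 : x ≠ 0) : 0 < w x := by
  obtain ⟨ε, hε, h⟩ := exists_mul_norm_le_of_mem_interior_dualCone hw
  exact (mul_pos hε (norm_pos_iff.2 hx0)).trans_le (h x hx)

lemma exists_forall_apply_eq_apply
    (hE : Function.Surjective (NormedSpace.inclusionInDoubleDual ℝ E))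
    (f : (E →L[ℝ] ℝ) →L[ℝ] ℝ) : ∃ x : E, ∀ w, f w = w x := by
  obtain ⟨x, rfl⟩ := hE f
  exact ⟨x, fun _ => rfl⟩

lemma exists_forall_prod_apply_eq
    (hE : Function.Surjective (NormedSpace.inclusionInDoubleDual ℝ E))
    (F : (E →L[ℝ] ℝ) × ℝ →L[ℝ] ℝ) : ∃ (x : E) (γ : ℝ), ∀ w s, F (w, s) = w x + s * γ := by
  obtain ⟨x, hx⟩ := exists_forall_apply_eq_apply hE (F.comp (.inl ℝ _ ℝ))
  refine ⟨x, F (0, 1), fun w s => ?_⟩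
  have : ((w, s) : (E →L[ℝ] ℝ) × ℝ) = (w, 0) + s • (0, 1) := by simp
  rw [this, map_add, map_smul, ← hx]
  simp

lemma exists_separating_of_notMem_interior
    (hE : Function.Surjective (NormedSpace.inclusionInDoubleDual ℝ E))
    {S : Set ((E →L[ℝ] ℝ) × ℝ)} (hS : Convex ℝ S) {p q : (E →L[ℝ] ℝ) × ℝ}
    (hq : q ∈ interior S) (hp : p ∉ interior S) :
    ∃ (x : E) (γ : ℝ), (∀ s ∈ S, s.1 x + s.2 * γ ≤ p.1 x + p.2 * γ) ∧
      q.1 x + q.2 * γ < p.1 x + p.2 * γ := by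
  obtain ⟨F, hF⟩ := geometric_hahn_banach_open_point hS.interior isOpen_interior hp
  obtain ⟨x, γ, hxγ⟩ := exists_forall_prod_apply_eq hE F
  have hF' : ∀ s, F s = s.1 x + s.2 * γ := fun s => hxγ s.1 s.2
  refine ⟨x, γ, fun s hs => ?_, by simpa only [hF'] using hF q hq⟩
  have : closure (interior S) ⊆ {s | F s ≤ F p} :=
    closure_minimal (fun s hs => (hF s hs).le) (isClosed_le F.continuous continuous_const)
  rw [hS.closure_interior_eq_closure_of_nonempty_interior ⟨q, hq⟩] at this
  simpa only [hF', mem_ofPred_eq] using this (subset_closure hs)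

theorem exists_ne_zero_forall_apply_nonpos
    (hE : Function.Surjective (NormedSpace.inclusionInDoubleDual ℝ E))
    {C : Set E} (hC : ∀ r : ℝ, 0 ≤ r → ∀ x ∈ C, r • x ∈ C) (hCconv : Convex ℝ C)
    (hCclosed : IsClosed C) (hCne : C.Nonempty) (hint : (interior (dualCone C)).Nonempty)
    {M : Set (E →L[ℝ] ℝ)} (hM : Convex ℝ M) (hMne : M.Nonempty)
    (hdisj : Disjoint (interior (dualCone C)) M) : ∃ x ∈ C, x ≠ 0 ∧ ∀ m ∈ M, m x ≤ 0 := by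
  obtain ⟨f, u, hfu, huf⟩ :=
    geometric_hahn_banach_open (convex_dualCone C).interior isOpen_interior hM hdisj
  obtain ⟨x, hx⟩ := exists_forall_apply_eq_apply hE f
  have hle : ∀ w ∈ dualCone C, w x ≤ u := by
    have : closure (interior (dualCone C)) ⊆ {w | w x ≤ u} :=
      closure_minimal (fun w hw => (hx w ▸ hfu w hw).le)
        (isClosed_le (continuous_eval_const x) continuous_const)
    rw [(convex_dualCone C).closure_interior_eq_closure_of_nonempty_interior hint] at this
    exact fun w hw => this (subset_closure hw)
  have hnonpos : ∀ w ∈ dualCone C, w x ≤ 0 := fun w hw =>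
    nonpos_of_forall_pos_mul_le fun t ht => hle _ (smul_mem_dualCone hw ht.le)
  have hu : 0 ≤ u := by simpa using hle 0 fun _ _ => le_rfl
  refine ⟨-x, mem_of_forall_mem_dualCone_nonneg hC hCconv hCclosed hCne fun w hw => ?_, ?_,
    fun m hm => ?_⟩
  · simpa using hnonpos w hw
  · intro hx0
    obtain ⟨w, hw⟩ := hint
    obtain ⟨m, hm⟩ := hMne
    have h1 := hfu w hw
    have h2 := huf m hm
    rw [hx, neg_eq_zero.1 hx0, map_zero] at h1 h2
    linarith
  · have := huf m hm
    rw [hx] at this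
    simp only [map_neg]
    linarith

end DualCone

section ConicProgram

variable {X Y : Type*} [NormedAddCommGroup X] [NormedSpace ℝ X] [NormedAddCommGroup Y]
  [NormedSpace ℝ Y] (A : X →L[ℝ] (Y →L[ℝ] ℝ)) (C : Set X) (K : Set Y)
  (c : X →L[ℝ] ℝ) (b : Y →L[ℝ] ℝ)

def primalFeasible : Set X := {x | x ∈ C ∧ A x - b ∈ dualCone K}

def dualFeasible : Set Y := {y | y ∈ K ∧ -(A.flip y) + c ∈ dualCone C}

noncomputable def primalValue : ℝ := sInf (c '' primalFeasible A C K b)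

noncomputable def dualValue : ℝ := sSup (b '' dualFeasible A C K c)

def primalSolutions : Set X := {x ∈ primalFeasible A C K b | c x = primalValue A C K c b}

def dualSolutions : Set Y := {y ∈ dualFeasible A C K c | b y = dualValue A C K c b}

def dualValueSet : Set ((X →L[ℝ] ℝ) × ℝ) :=
  {p | ∃ y ∈ K, -(A.flip y) + c - p.1 ∈ dualCone C ∧ p.2 ≤ b y}

variable {A C K c b}

lemma dual_le_primal {x : X} {y : Y} (hx : x ∈ primalFeasible A C K b)
    (hy : y ∈ dualFeasible A C K c) : b y ≤ c x := by
  have h1 := hy.2 x hx.1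
  have h2 := hx.2 y hy.1
  simp only [add_apply, neg_apply, ContinuousLinearMap.flip_apply, sub_apply] at h1 h2
  linarith

lemma neg_flip_flip : (-A.flip).flip = -A := by
  ext
  simp

lemma primalFeasible_neg_flip : primalFeasible (-A.flip) K C (-c) = dualFeasible A C K c := by
  ext y
  simp [primalFeasible, dualFeasible, sub_eq_add_neg]

lemma dualFeasible_neg_flip : dualFeasible (-A.flip) K C (-b) = primalFeasible A C K b := by
  ext x
  simp [primalFeasible, dualFeasible, neg_flip_flip, sub_eq_add_neg]

lemma convex_primalFeasible (hC : Convex ℝ C) : Convex ℝ (primalFeasible A C K b) := by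
  rintro x ⟨hxC, hxK⟩ x' ⟨hx'C, hx'K⟩ a a' ha ha' haa
  refine ⟨hC hxC hx'C ha ha' haa, fun y hy => ?_⟩
  have h := add_nonneg (mul_nonneg ha (hxK y hy)) (mul_nonneg ha' (hx'K y hy))
  simp only [sub_apply, map_add, map_smul, add_apply, smul_apply, smul_eq_mul] at h ⊢
  linear_combination h - b y * haa

lemma convex_dualFeasible (hK : Convex ℝ K) : Convex ℝ (dualFeasible A C K c) :=
  primalFeasible_neg_flip (A := A) ▸ convex_primalFeasible hK

lemma convex_primalSolutions (hC : Convex ℝ C) : Convex ℝ (primalSolutions A C K c b) :=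
  (convex_primalFeasible hC).inter (convex_hyperplane c.toLinearMap.isLinear _)

lemma convex_dualSolutions (hK : Convex ℝ K) : Convex ℝ (dualSolutions A C K c b) :=
  (convex_dualFeasible hK).inter (convex_hyperplane b.toLinearMap.isLinear _)

lemma isBounded_primalFeasible_sublevel {y₀ : Y} (hy₀ : y₀ ∈ K)
    (hslater : -(A.flip y₀) + c ∈ interior (dualCone C)) (r : ℝ) :
    Bornology.IsBounded {x ∈ primalFeasible A C K b | c x ≤ r} := by
  obtain ⟨ε, hε, hco⟩ := exists_mul_norm_le_of_mem_interior_dualCone hslater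
  refine (Metric.isBounded_closedBall (x := 0) (r := (r - b y₀) / ε)).subset ?_
  rintro x ⟨hx, hcx⟩
  have h1 := hco x hx.1
  have h2 := hx.2 y₀ hy₀
  simp only [add_apply, neg_apply, ContinuousLinearMap.flip_apply, sub_apply] at h1 h2
  rw [Metric.mem_closedBall, dist_zero_right, le_div_iff₀ hε]
  linarith

lemma isBounded_dualFeasible_superlevel {x₀ : X} (hx₀ : x₀ ∈ C)
    (hslater : A x₀ - b ∈ interior (dualCone K)) (r : ℝ) :
    Bornology.IsBounded {y ∈ dualFeasible A C K c | r ≤ b y} := by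
  have := isBounded_primalFeasible_sublevel (A := -A.flip) (b := -c) hx₀
    (by simpa [neg_flip_flip, sub_eq_add_neg] using hslater) (-r)
  simpa [primalFeasible_neg_flip] using this

lemma isBounded_primalSolutions {y₀ : Y} (hy₀ : y₀ ∈ K)
    (hslater : -(A.flip y₀) + c ∈ interior (dualCone C)) :
    Bornology.IsBounded (primalSolutions A C K c b) :=
  (isBounded_primalFeasible_sublevel hy₀ hslater _).subset fun _ hx => ⟨hx.1, hx.2.le⟩

lemma isBounded_dualSolutions {x₀ : X} (hx₀ : x₀ ∈ C)
    (hslater : A x₀ - b ∈ interior (dualCone K)) :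
    Bornology.IsBounded (dualSolutions A C K c b) :=
  (isBounded_dualFeasible_superlevel hx₀ hslater _).subset fun _ hy => ⟨hy.1, hy.2.ge⟩

lemma convex_dualValueSet (hK : Convex ℝ K) : Convex ℝ (dualValueSet A C K c b) := by
  rintro p ⟨y, hy, hpC, hpb⟩ q ⟨y', hy', hqC, hqb⟩ a a' ha ha' haa
  refine ⟨a • y + a' • y', hK hy hy' ha ha' haa, ?_, ?_⟩
  · convert convex_dualCone C hpC hqC ha ha' haa using 1
    ext x
    simp only [add_apply, neg_apply, sub_apply, smul_apply, ContinuousLinearMap.flip_apply,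
      map_add, map_smul, Prod.fst_add, Prod.smul_fst, smul_eq_mul, add_apply]
    linear_combination -(c x) * haa
  · simp only [Prod.snd_add, Prod.smul_snd, smul_eq_mul, map_add, map_smul]
    exact add_le_add (mul_le_mul_of_nonneg_left hpb ha) (mul_le_mul_of_nonneg_left hqb ha')

lemma mem_interior_dualValueSet {y₀ : Y} (hy₀ : y₀ ∈ K)
    (hslater : -(A.flip y₀) + c ∈ interior (dualCone C)) :
    ((0 : X →L[ℝ] ℝ), b y₀ - 1) ∈ interior (dualValueSet A C K c b) := by
  refine mem_interior.2 ⟨((fun u => -(A.flip y₀) + c - u) ⁻¹' interior (dualCone C)) ×ˢ Iio (b y₀),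
    ?_, (isOpen_interior.preimage (continuous_const.sub continuous_id)).prod isOpen_Iio, ?_⟩
  · rintro ⟨u, s⟩ ⟨hu, hs⟩
    exact ⟨y₀, hy₀, interior_subset hu, le_of_lt hs⟩
  · simpa using hslater

lemma zero_mk_notMem_interior_dualValueSet {r : ℝ} (hr : ∀ y ∈ dualFeasible A C K c, b y ≤ r) :
    ((0 : X →L[ℝ] ℝ), r) ∉ interior (dualValueSet A C K c b) := by
  intro h
  obtain ⟨ε, hε, hball⟩ := Metric.mem_nhds_iff.1 (mem_interior_iff_mem_nhds.1 h)
  have hmem : ((0 : X →L[ℝ] ℝ), r + ε / 2) ∈ Metric.ball ((0 : X →L[ℝ] ℝ), r) ε := by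
    rw [Metric.mem_ball, Prod.dist_eq, dist_self, Real.dist_eq, add_sub_cancel_left,
      abs_of_pos (half_pos hε)]
    simpa using half_lt_self hε
  obtain ⟨y, hy, hyC, hle⟩ := hball hmem
  have := hr y ⟨hy, by simpa using hyC⟩
  linarith [half_pos hε]

lemma exists_primal_le_of_multiplier (hC : ∀ r : ℝ, 0 ≤ r → ∀ x ∈ C, r • x ∈ C)
    (hCconv : Convex ℝ C) (hCclosed : IsClosed C) (hCne : C.Nonempty)
    (hK : ∀ r : ℝ, 0 ≤ r → ∀ y ∈ K, r • y ∈ K) {y₀ : Y} (hy₀ : y₀ ∈ K)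
    (hw₀ : -(A.flip y₀) + c ∈ dualCone C) {x : X} {γ r : ℝ} (hγ : 0 < γ)
    (hkey : ∀ y ∈ K, ∀ w ∈ dualCone C, ∀ s ≤ b y, (-(A.flip y) + c - w) x + s * γ ≤ r * γ) :
    ∃ x' ∈ primalFeasible A C K b, c x' ≤ r := by
  have hxC : x ∈ C := mem_of_forall_mem_dualCone_nonneg hC hCconv hCclosed hCne fun w hw => by
    refine neg_nonpos.1 (nonpos_of_forall_pos_mul_le (q := r * γ - b y₀ * γ) fun t ht => ?_)
    have := hkey y₀ hy₀ _ (add_mem_dualCone hw₀ (smul_mem_dualCone hw ht.le)) (b y₀) le_rfl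
    simp only [sub_add_cancel_left, neg_apply, smul_apply, smul_eq_mul] at this
    linarith
  have hAx : ∀ y ∈ K, γ * b y ≤ A x y := fun y hy => by
    refine sub_nonpos.1 (nonpos_of_forall_pos_mul_le (q := r * γ - c x) fun t ht => ?_)
    have := hkey (t • y) (hK t ht.le y hy) 0 (fun _ _ => le_rfl) (t * b y) (by simp)
    simp only [map_smul, sub_zero, add_apply, neg_apply, smul_apply, smul_eq_mul,
      ContinuousLinearMap.flip_apply] at this
    linarith
  have hcx : c x ≤ r * γ := by
    have h0 : (0 : Y) ∈ K := by simpa using hK 0 le_rfl y₀ hy₀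
    simpa using hkey 0 h0 0 (fun _ _ => le_rfl) 0 (by simp)
  refine ⟨γ⁻¹ • x, ⟨hC _ (inv_nonneg.2 hγ.le) x hxC, fun y hy => ?_⟩, ?_⟩
  · simpa [sub_nonneg, le_inv_mul_iff₀ hγ] using hAx y hy
  · simpa [inv_mul_le_iff₀ hγ, mul_comm] using hcx

theorem exists_primal_le_of_dual_slater
    (hX : Function.Surjective (NormedSpace.inclusionInDoubleDual ℝ X))
    (hC : ∀ r : ℝ, 0 ≤ r → ∀ x ∈ C, r • x ∈ C) (hCconv : Convex ℝ C) (hCclosed : IsClosed C)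
    (hCne : C.Nonempty) (hK : ∀ r : ℝ, 0 ≤ r → ∀ y ∈ K, r • y ∈ K) (hKconv : Convex ℝ K)
    {y₀ : Y} (hy₀ : y₀ ∈ K) (hslater : -(A.flip y₀) + c ∈ interior (dualCone C)) {r : ℝ}
    (hr : ∀ y ∈ dualFeasible A C K c, b y ≤ r) : ∃ x ∈ primalFeasible A C K b, c x ≤ r := by
  obtain ⟨x, γ, hle, hlt⟩ := exists_separating_of_notMem_interior hX
    (convex_dualValueSet hKconv) (mem_interior_dualValueSet hy₀ hslater)
    (zero_mk_notMem_interior_dualValueSet hr)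
  simp only [zero_apply, zero_add] at hle hlt
  have hkey : ∀ y ∈ K, ∀ w ∈ dualCone C, ∀ s ≤ b y,
      (-(A.flip y) + c - w) x + s * γ ≤ r * γ :=
    fun y hy w hw s hs => hle (_, s) ⟨y, hy, by simpa using hw, hs⟩
  have hγ : 0 ≤ γ := by
    refine neg_nonpos.1 (nonpos_of_forall_pos_mul_le (q := r * γ - b y₀ * γ) fun t ht => ?_)
    have := hkey y₀ hy₀ _ (interior_subset hslater) (b y₀ - t) (by linarith)
    simp only [sub_self, zero_apply, zero_add] at this
    linarith
  exact exists_primal_le_of_multiplier hC hCconv hCclosed hCne hK hy₀ (interior_subset hslater)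
    (hγ.lt_of_ne (by rintro rfl; simp at hlt)) hkey

theorem exists_dual_ge_of_primal_slater
    (hY : Function.Surjective (NormedSpace.inclusionInDoubleDual ℝ Y))
    (hC : ∀ r : ℝ, 0 ≤ r → ∀ x ∈ C, r • x ∈ C) (hCconv : Convex ℝ C)
    (hK : ∀ r : ℝ, 0 ≤ r → ∀ y ∈ K, r • y ∈ K) (hKconv : Convex ℝ K) (hKclosed : IsClosed K)
    (hKne : K.Nonempty) {x₀ : X} (hx₀ : x₀ ∈ C) (hslater : A x₀ - b ∈ interior (dualCone K))
    {r : ℝ} (hr : ∀ x ∈ primalFeasible A C K b, r ≤ c x) :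
    ∃ y ∈ dualFeasible A C K c, r ≤ b y := by
  obtain ⟨y, hy, hby⟩ := exists_primal_le_of_dual_slater (A := -A.flip) (c := -b) (b := -c)
    (r := -r) hY hK hKconv hKclosed hKne hC hCconv hx₀
    (by simpa [neg_flip_flip, sub_eq_add_neg] using hslater)
    (fun x hx => by simpa using hr x (dualFeasible_neg_flip (A := A) ▸ hx))
  exact ⟨y, primalFeasible_neg_flip (A := A) ▸ hy, by simpa using hby⟩

theorem primalValue_eq_dualValue_and_nonempty_primalSolutions
    (hX : Function.Surjective (NormedSpace.inclusionInDoubleDual ℝ X))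
    (hC : ∀ r : ℝ, 0 ≤ r → ∀ x ∈ C, r • x ∈ C) (hCconv : Convex ℝ C) (hCclosed : IsClosed C)
    (hK : ∀ r : ℝ, 0 ≤ r → ∀ y ∈ K, r • y ∈ K) (hKconv : Convex ℝ K)
    (hP : (primalFeasible A C K b).Nonempty) {y₀ : Y} (hy₀ : y₀ ∈ K)
    (hslater : -(A.flip y₀) + c ∈ interior (dualCone C)) :
    primalValue A C K c b = dualValue A C K c b ∧ (primalSolutions A C K c b).Nonempty := by
  obtain ⟨x₀, hx₀⟩ := hP
  have hy₀D : y₀ ∈ dualFeasible A C K c := ⟨hy₀, interior_subset hslater⟩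
  have hbdd : BddAbove (b '' dualFeasible A C K c) :=
    ⟨c x₀, forall_mem_image.2 fun y hy => dual_le_primal hx₀ hy⟩
  have hle : ∀ x ∈ primalFeasible A C K b, dualValue A C K c b ≤ c x := fun x hx =>
    csSup_le ⟨_, mem_image_of_mem b hy₀D⟩ (forall_mem_image.2 fun y hy => dual_le_primal hx hy)
  obtain ⟨x, hx, hcx⟩ := exists_primal_le_of_dual_slater hX hC hCconv hCclosed ⟨x₀, hx₀.1⟩ hK
    hKconv hy₀ hslater fun y hy => le_csSup hbdd (mem_image_of_mem b hy)
  have hval : primalValue A C K c b = c x :=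
    IsLeast.csInf_eq
      ⟨mem_image_of_mem c hx, forall_mem_image.2 fun x' hx' => hcx.trans (hle x' hx')⟩
  exact ⟨hval.trans (le_antisymm hcx (hle x hx)), x, hx, hval.symm⟩

theorem primalValue_eq_dualValue_and_nonempty_dualSolutions
    (hY : Function.Surjective (NormedSpace.inclusionInDoubleDual ℝ Y))
    (hC : ∀ r : ℝ, 0 ≤ r → ∀ x ∈ C, r • x ∈ C) (hCconv : Convex ℝ C)
    (hK : ∀ r : ℝ, 0 ≤ r → ∀ y ∈ K, r • y ∈ K) (hKconv : Convex ℝ K) (hKclosed : IsClosed K)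
    (hD : (dualFeasible A C K c).Nonempty) {x₀ : X} (hx₀ : x₀ ∈ C)
    (hslater : A x₀ - b ∈ interior (dualCone K)) :
    primalValue A C K c b = dualValue A C K c b ∧ (dualSolutions A C K c b).Nonempty := by
  obtain ⟨y₀, hy₀⟩ := hD
  have hx₀P : x₀ ∈ primalFeasible A C K b := ⟨hx₀, interior_subset hslater⟩
  have hbdd : BddBelow (c '' primalFeasible A C K b) :=
    ⟨b y₀, forall_mem_image.2 fun x hx => dual_le_primal hx hy₀⟩
  have hle : ∀ y ∈ dualFeasible A C K c, b y ≤ primalValue A C K c b := fun y hy =>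
    le_csInf ⟨_, mem_image_of_mem c hx₀P⟩ (forall_mem_image.2 fun x hx => dual_le_primal hx hy)
  obtain ⟨y, hy, hby⟩ := exists_dual_ge_of_primal_slater hY hC hCconv hK hKconv hKclosed
    ⟨y₀, hy₀.1⟩ hx₀ hslater fun x hx => csInf_le hbdd (mem_image_of_mem c hx)
  have hval : dualValue A C K c b = b y :=
    IsGreatest.csSup_eq
      ⟨mem_image_of_mem b hy, forall_mem_image.2 fun y' hy' => (hle y' hy').trans hby⟩
  exact ⟨(le_antisymm (hle y hy) hby).symm.trans hval.symm, y, hy, hval.symm⟩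

lemma apply_ne_zero_of_optimalI_disjoint_ker (hC : ∀ r : ℝ, 0 ≤ r → ∀ x ∈ C, r • x ∈ C)
    {α : X →L[ℝ] ℝ} (hα : α ∈ interior (dualCone C)) {S : Set X} {T : Set Y}
    (hS : {x ∈ C | α x = 1} ⊆ S) (hTK : T ⊆ K) (hT : T.Nonempty)
    (hbdd : BddAbove ((fun x => sInf ((fun y => A x y) '' T)) '' S))
    (hv : sSup ((fun x => sInf ((fun y => A x y) '' T)) '' S) = 0)
    (hI : {x ∈ S | sInf ((fun y => A x y) '' T) = 0} ∩ {x | c x = 0} = ∅) :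
    ∀ x ∈ C, x ≠ 0 → A x ∈ dualCone K → c x ≠ 0 := by
  intro x hxC hx0 hAx hcx
  have hαx := pos_of_mem_interior_dualCone hα hxC hx0
  have hx'S : (α x)⁻¹ • x ∈ S := hS ⟨hC _ (inv_nonneg.2 hαx.le) x hxC, by simp [hαx.ne']⟩
  have hopt := sInf_image_eq_zero_of_nonneg (fun x y => A x y) hT hbdd hv hx'S fun y hy => by
    simpa using mul_nonneg (inv_nonneg.2 hαx.le) (hAx y (hTK hy))
  exact eq_empty_iff_forall_notMem.1 hI _ ⟨⟨hx'S, hopt⟩, by simp [hcx]⟩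

lemma apply_ne_zero_of_optimalII_disjoint_ker (hK : ∀ r : ℝ, 0 ≤ r → ∀ y ∈ K, r • y ∈ K)
    {β : Y →L[ℝ] ℝ} (hβ : β ∈ interior (dualCone K)) {S : Set X} {T : Set Y}
    (hT : {y ∈ K | β y = 1} ⊆ T) (hSC : S ⊆ C) (hS : S.Nonempty)
    (hbdd : BddBelow ((fun y => sSup ((fun x => A x y) '' S)) '' T))
    (hv : sInf ((fun y => sSup ((fun x => A x y) '' S)) '' T) = 0)
    (hII : {y ∈ T | sSup ((fun x => A x y) '' S) = 0} ∩ {y | b y = 0} = ∅) :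
    ∀ y ∈ K, y ≠ 0 → -(A.flip y) ∈ dualCone C → b y ≠ 0 := by
  intro y hyK hy0 hAy hby
  have hβy := pos_of_mem_interior_dualCone hβ hyK hy0
  have hy'T : (β y)⁻¹ • y ∈ T := hT ⟨hK _ (inv_nonneg.2 hβy.le) y hyK, by simp [hβy.ne']⟩
  have hopt := sSup_image_eq_zero_of_nonpos (fun x y => A x y) hS hbdd hv hy'T fun x hx => by
    simpa using mul_nonneg (inv_nonneg.2 hβy.le) (hAy x (hSC hx))
  exact eq_empty_iff_forall_notMem.1 hII _ ⟨⟨hy'T, hopt⟩, by simp [hby]⟩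

theorem exists_dual_slater_point
    (hX : Function.Surjective (NormedSpace.inclusionInDoubleDual ℝ X))
    (hC : ∀ r : ℝ, 0 ≤ r → ∀ x ∈ C, r • x ∈ C) (hCconv : Convex ℝ C) (hCclosed : IsClosed C)
    (hCne : C.Nonempty) (hK : ∀ r : ℝ, 0 ≤ r → ∀ y ∈ K, r • y ∈ K) (hKconv : Convex ℝ K)
    (hint : (interior (dualCone C)).Nonempty) {y₀ : Y} (hy₀ : y₀ ∈ dualFeasible A C K c)
    (hrec : ∀ x ∈ C, x ≠ 0 → A x ∈ dualCone K → c x ≠ 0) :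
    ∃ y ∈ K, -(A.flip y) + c ∈ interior (dualCone C) := by
  by_contra! hno
  have hM : Convex ℝ ((fun y => -(A.flip y) + c) '' K) := by
    simpa [image_image, add_comm] using (hKconv.linear_image (-A.flip).toLinearMap).translate c
  obtain ⟨x, hxC, hx0, hx⟩ := exists_ne_zero_forall_apply_nonpos hX hC hCconv hCclosed hCne hint
    hM ⟨_, y₀, hy₀.1, rfl⟩ (disjoint_left.2 <| by rintro _ hw ⟨y, hy, rfl⟩; exact hno y hy hw)
  have hcx : ∀ y ∈ K, c x ≤ A x y := fun y hy => by
    simpa using hx _ ⟨y, hy, rfl⟩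
  have hAx : A x ∈ dualCone K := fun y hy =>
    neg_nonpos.1 (nonpos_of_forall_pos_mul_le (q := -c x) fun t ht => by
      simpa using hcx (t • y) (hK t ht.le y hy))
  have hcx_nonpos : c x ≤ 0 := by simpa using hcx 0 (by simpa using hK 0 le_rfl y₀ hy₀.1)
  have hcx_nonneg : 0 ≤ c x := by
    have := hy₀.2 x hxC
    simp only [add_apply, neg_apply, ContinuousLinearMap.flip_apply] at this
    linarith [hAx y₀ hy₀.1]
  exact hrec x hxC hx0 hAx (le_antisymm hcx_nonpos hcx_nonneg)

theorem exists_primal_slater_point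
    (hY : Function.Surjective (NormedSpace.inclusionInDoubleDual ℝ Y))
    (hC : ∀ r : ℝ, 0 ≤ r → ∀ x ∈ C, r • x ∈ C) (hCconv : Convex ℝ C)
    (hK : ∀ r : ℝ, 0 ≤ r → ∀ y ∈ K, r • y ∈ K) (hKconv : Convex ℝ K) (hKclosed : IsClosed K)
    (hKne : K.Nonempty) (hint : (interior (dualCone K)).Nonempty) {x₀ : X}
    (hx₀ : x₀ ∈ primalFeasible A C K b)
    (hrec : ∀ y ∈ K, y ≠ 0 → -(A.flip y) ∈ dualCone C → b y ≠ 0) :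
    ∃ x ∈ C, A x - b ∈ interior (dualCone K) := by
  obtain ⟨x, hx, hxint⟩ := exists_dual_slater_point (A := -A.flip) (c := -b) hY hK hKconv
    hKclosed hKne hC hCconv hint (dualFeasible_neg_flip (A := A) ▸ hx₀)
    (fun y hy hy0 hAy => by simpa using hrec y hy hy0 hAy)
  exact ⟨x, hx, by simpa [neg_flip_flip, sub_eq_add_neg] using hxint⟩

end ConicProgram

theorem stmt9_general
    {X Y : Type*} [NormedAddCommGroup X] [NormedSpace ℝ X]
    [NormedAddCommGroup Y] [NormedSpace ℝ Y]
    -- reflexivity of X and Y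
    (hXrefl : Function.Surjective (NormedSpace.inclusionInDoubleDual ℝ X))
    (hYrefl : Function.Surjective (NormedSpace.inclusionInDoubleDual ℝ Y))
    (A : X →L[ℝ] (Y →L[ℝ] ℝ))
    -- closed convex cones C, K with solid dual cones
    (C : Set X) (K : Set Y)
    (hCcone : ∀ (r : ℝ), 0 ≤ r → ∀ x ∈ C, r • x ∈ C) (hCconv : Convex ℝ C)
    (hCclosed : IsClosed C)
    (hKcone : ∀ (r : ℝ), 0 ≤ r → ∀ y ∈ K, r • y ∈ K) (hKconv : Convex ℝ K)
    (hKclosed : IsClosed K)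
    (Cstar : Set (X →L[ℝ] ℝ)) (hCstar : Cstar = {w : X →L[ℝ] ℝ | ∀ x ∈ C, 0 ≤ w x})
    (Kstar : Set (Y →L[ℝ] ℝ)) (hKstar : Kstar = {z : Y →L[ℝ] ℝ | ∀ y ∈ K, 0 ≤ z y})
    -- data of the programs and consistency
    (c : X →L[ℝ] ℝ) (b : Y →L[ℝ] ℝ)
    (FeasP : Set X) (hFeasP : FeasP = {x | x ∈ C ∧ A x - b ∈ Kstar})
    (FeasD : Set Y) (hFeasD : FeasD = {y | y ∈ K ∧ -(A.flip y) + c ∈ Cstar})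
    (hPne : FeasP.Nonempty) (hDne : FeasD.Nonempty)
    (valP valD : ℝ)
    (hvalP : valP = sInf ((fun x => c x) '' FeasP))
    (hvalD : valD = sSup ((fun y => b y) '' FeasD))
    (SolP : Set X) (hSolP : SolP = {x ∈ FeasP | c x = valP})
    (SolD : Set Y) (hSolD : SolD = {y ∈ FeasD | b y = valD})
    -- the game G = (α,β,A) with α ∈ int C*, β ∈ int K*
    (α : X →L[ℝ] ℝ) (hα : α ∈ interior Cstar)
    (β : Y →L[ℝ] ℝ) (hβ : β ∈ interior Kstar)
    (S : Set X) (hS : S = {x ∈ C | α x = 1})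
    (T : Set Y) (hT : T = {y ∈ K | β y = 1})
    -- finite security levels (F3)
    (hSne : S.Nonempty) (hTne : T.Nonempty)
    (hba : BddAbove ((fun x => sInf ((fun y => A x y) '' T)) '' S))
    (hbb' : BddBelow ((fun y => sSup ((fun x => A x y) '' S)) '' T))
    -- v is the value of the game
    (v : ℝ)
    (hv : v = sSup ((fun x => sInf ((fun y => A x y) '' T)) '' S))
    (hv' : v = sInf ((fun y => sSup ((fun x => A x y) '' S)) '' T))
    -- sets of optimal strategies and the orthogonal complements c^⊥, b^⊥
    (BI : Set X) (hBI : BI = {x ∈ S | sInf ((fun y => A x y) '' T) = v})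
    (BII : Set Y) (hBII : BII = {y ∈ T | sSup ((fun x => A x y) '' S) = v})
    (cperp : Set X) (hcperp : cperp = {x : X | c x = 0})
    (bperp : Set Y) (hbperp : bperp = {y : Y | b y = 0})
    -- hypotheses of part (ii): v = 0 and B^I ∩ c^⊥ = ∅ or B^II ∩ b^⊥ = ∅
    (hv0 : v = 0)
    (hempty : BI ∩ cperp = ∅ ∨ BII ∩ bperp = ∅) :
    -- at least one of (P), (D) is strictly feasible
    ((∃ x ∈ C, A x - b ∈ interior Kstar) ∨ (∃ y ∈ K, -(A.flip y) + c ∈ interior Cstar)) ∧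
    -- val(P) = val(D)
    valP = valD ∧
    -- at least one of S(P), S(D) is nonempty, convex and bounded
    ((SolP.Nonempty ∧ Convex ℝ SolP ∧ Bornology.IsBounded SolP) ∨
     (SolD.Nonempty ∧ Convex ℝ SolD ∧ Bornology.IsBounded SolD)) := by
  subst hCstar hKstar hFeasP hFeasD hvalP hvalD hSolP hSolD hS hT hBI hBII hcperp hbperp hv0
  obtain ⟨x₀, hx₀⟩ := hPne
  obtain ⟨y₀, hy₀⟩ := hDne
  rcases hempty with hI | hII
  · obtain ⟨y₁, hy₁, hslater⟩ := exists_dual_slater_point hXrefl hCcone hCconv hCclosed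
      ⟨x₀, hx₀.1⟩ hKcone hKconv ⟨α, hα⟩ hy₀ (apply_ne_zero_of_optimalI_disjoint_ker hCcone hα
        subset_rfl (fun _ hy => hy.1) hTne hba hv.symm hI)
    obtain ⟨hval, hsol⟩ := primalValue_eq_dualValue_and_nonempty_primalSolutions hXrefl hCcone
      hCconv hCclosed hKcone hKconv ⟨x₀, hx₀⟩ hy₁ hslater
    exact ⟨Or.inr ⟨y₁, hy₁, hslater⟩, hval,
      Or.inl ⟨hsol, convex_primalSolutions hCconv, isBounded_primalSolutions hy₁ hslater⟩⟩
  · obtain ⟨x₁, hx₁, hslater⟩ := exists_primal_slater_point hYrefl hCcone hCconv hKcone hKconv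
      hKclosed ⟨y₀, hy₀.1⟩ ⟨β, hβ⟩ hx₀ (apply_ne_zero_of_optimalII_disjoint_ker hKcone hβ
        subset_rfl (fun _ hx => hx.1) hSne hbb' hv'.symm hII)
    obtain ⟨hval, hsol⟩ := primalValue_eq_dualValue_and_nonempty_dualSolutions hYrefl hCcone
      hCconv hKcone hKconv hKclosed ⟨y₀, hy₀⟩ hx₁ hslater
    exact ⟨Or.inl ⟨x₁, hx₁, hslater⟩, hval,
      Or.inr ⟨hsol, convex_dualSolutions hKconv, isBounded_dualSolutions hx₁ hslater⟩⟩

/-- Theorem 4.1(ii): if {(P),(D)} is consistent, the game G = (α,β,A)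
has value v = 0, and B^I ∩ c^⊥ = ∅ or B^II ∩ b^⊥ = ∅, then at least one of (P),(D) is
strictly feasible; in fact val(P) = val(D) and at least one of S(P), S(D) is nonempty,
convex and bounded. -/
theorem stmt9
    {X Y : Type*} [NormedAddCommGroup X] [NormedSpace ℝ X] [CompleteSpace X]
    [NormedAddCommGroup Y] [NormedSpace ℝ Y] [CompleteSpace Y]
    -- reflexivity of X and Y
    (hXrefl : Function.Surjective (NormedSpace.inclusionInDoubleDual ℝ X))
    (hYrefl : Function.Surjective (NormedSpace.inclusionInDoubleDual ℝ Y))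
    (A : X →L[ℝ] (Y →L[ℝ] ℝ))
    -- closed convex cones C, K with solid dual cones
    (C : Set X) (K : Set Y)
    (hCcone : ∀ (r : ℝ), 0 ≤ r → ∀ x ∈ C, r • x ∈ C) (hCconv : Convex ℝ C)
    (hCclosed : IsClosed C)
    (hKcone : ∀ (r : ℝ), 0 ≤ r → ∀ y ∈ K, r • y ∈ K) (hKconv : Convex ℝ K)
    (hKclosed : IsClosed K)
    (Cstar : Set (X →L[ℝ] ℝ)) (hCstar : Cstar = {w : X →L[ℝ] ℝ | ∀ x ∈ C, 0 ≤ w x})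
    (Kstar : Set (Y →L[ℝ] ℝ)) (hKstar : Kstar = {z : Y →L[ℝ] ℝ | ∀ y ∈ K, 0 ≤ z y})
    -- data of the programs and consistency
    (c : X →L[ℝ] ℝ) (b : Y →L[ℝ] ℝ)
    (FeasP : Set X) (hFeasP : FeasP = {x | x ∈ C ∧ A x - b ∈ Kstar})
    (FeasD : Set Y) (hFeasD : FeasD = {y | y ∈ K ∧ -(A.flip y) + c ∈ Cstar})
    (hPne : FeasP.Nonempty) (hDne : FeasD.Nonempty)
    (valP valD : ℝ)
    (hvalP : valP = sInf ((fun x => c x) '' FeasP))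
    (hvalD : valD = sSup ((fun y => b y) '' FeasD))
    (SolP : Set X) (hSolP : SolP = {x ∈ FeasP | c x = valP})
    (SolD : Set Y) (hSolD : SolD = {y ∈ FeasD | b y = valD})
    -- the game G = (α,β,A) with α ∈ int C*, β ∈ int K*
    (α : X →L[ℝ] ℝ) (hα : α ∈ interior Cstar)
    (β : Y →L[ℝ] ℝ) (hβ : β ∈ interior Kstar)
    (S : Set X) (hS : S = {x ∈ C | α x = 1})
    (T : Set Y) (hT : T = {y ∈ K | β y = 1})
    -- finite security levels (F3)
    (hSne : S.Nonempty) (hTne : T.Nonempty)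
    (hbb : ∀ x ∈ S, BddBelow ((fun y => A x y) '' T))
    (hba : BddAbove ((fun x => sInf ((fun y => A x y) '' T)) '' S))
    (hba' : ∀ y ∈ T, BddAbove ((fun x => A x y) '' S))
    (hbb' : BddBelow ((fun y => sSup ((fun x => A x y) '' S)) '' T))
    -- v is the value of the game
    (v : ℝ)
    (hv : v = sSup ((fun x => sInf ((fun y => A x y) '' T)) '' S))
    (hv' : v = sInf ((fun y => sSup ((fun x => A x y) '' S)) '' T))
    -- sets of optimal strategies and the orthogonal complements c^⊥, b^⊥
    (BI : Set X) (hBI : BI = {x ∈ S | sInf ((fun y => A x y) '' T) = v})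
    (BII : Set Y) (hBII : BII = {y ∈ T | sSup ((fun x => A x y) '' S) = v})
    (cperp : Set X) (hcperp : cperp = {x : X | c x = 0})
    (bperp : Set Y) (hbperp : bperp = {y : Y | b y = 0})
    -- hypotheses of part (ii): v = 0 and B^I ∩ c^⊥ = ∅ or B^II ∩ b^⊥ = ∅
    (hv0 : v = 0)
    (hempty : BI ∩ cperp = ∅ ∨ BII ∩ bperp = ∅) :
    -- at least one of (P), (D) is strictly feasible
    ((∃ x ∈ C, A x - b ∈ interior Kstar) ∨ (∃ y ∈ K, -(A.flip y) + c ∈ interior Cstar)) ∧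
    -- val(P) = val(D)
    valP = valD ∧
    -- at least one of S(P), S(D) is nonempty, convex and bounded
    ((SolP.Nonempty ∧ Convex ℝ SolP ∧ Bornology.IsBounded SolP) ∨
     (SolD.Nonempty ∧ Convex ℝ SolD ∧ Bornology.IsBounded SolD)) :=
  stmt9_general hXrefl hYrefl A C K hCcone hCconv hCclosed hKcone hKconv hKclosed Cstar hCstar Kstar
    hKstar c b FeasP hFeasP FeasD hFeasD hPne hDne valP valD hvalP hvalD SolP hSolP SolD hSolD α hα
    β hβ S hS T hT hSne hTne hba hbb' v hv hv' BI hBI BII hBII cperp hcperp bperp hbperp hv0 hempty
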